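/- Let 1 → N → H → G → 1 be an extension of groups (i.e., a surjective group homomorphism H → G with kernel N) such that N ≤ Z_n(H) for a fixed positive integer n. If G is a perfect group, then γ_{n+1}(H) is a perfect group. -/

import Mathlib

/-!
The image of `γ_{k+1}(H)` in the perfect group `G` is all of `G`, so `γ_{k+1}(H) Z_n(H) = H` for
every `k`. By the three subgroups lemma `Z_n(H)` centralizes `L = γ_{n+1}(H)`, hence
`γ_{n+2}(H) = [L, L Z_n(H)] = [L, L]`. Modulo `[L, L]` the group `H` is then the image of
`Z_n(H)`, so it is nilpotent of class at most `n`, which forces `L ≤ [L, L]`.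
-/

open Subgroup
open scoped Pointwise commutatorElement

namespace Subgroup

variable {H : Type*} [Group H]

theorem commutator_commutator_le_of_rotate {A B C N : Subgroup H} [N.Normal]
    (h₁ : ⁅⁅B, C⁆, A⁆ ≤ N) (h₂ : ⁅⁅C, A⁆, B⁆ ≤ N) : ⁅⁅A, B⁆, C⁆ ≤ N := by
  simp only [← QuotientGroup.ker_mk' N, ← map_eq_bot_iff, map_commutator] at h₁ h₂ ⊢
  exact commutator_commutator_eq_bot_of_rotate h₁ h₂

theorem commutator_lowerCentralSeries_upperCentralSeries_le (j k : ℕ) :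
    ⁅(⊤ : Subgroup H).lowerCentralSeries j, upperCentralSeries H (k + j)⁆ ≤
      upperCentralSeries H k := by
  induction j generalizing k with
  | zero => exact commutator_le_right _ _
  | succ j ih =>
    rw [lowerCentralSeries_succ]
    apply commutator_commutator_le_of_rotate
    · calc ⁅⁅⊤, upperCentralSeries H (k + j + 1)⁆, (⊤ : Subgroup H).lowerCentralSeries j⁆
          ≤ ⁅upperCentralSeries H (k + j), (⊤ : Subgroup H).lowerCentralSeries j⁆ := by
            rw [commutator_comm ⊤]
            exact commutator_mono (commutator_upperCentralSeries_top_le H _) le_rfl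
        _ ≤ upperCentralSeries H k := by rw [commutator_comm]; exact ih k
    · rw [show k + (j + 1) = k + 1 + j by omega]
      calc ⁅⁅upperCentralSeries H (k + 1 + j), (⊤ : Subgroup H).lowerCentralSeries j⁆, ⊤⁆
          ≤ ⁅upperCentralSeries H (k + 1), ⊤⁆ := by
            rw [commutator_comm (upperCentralSeries H _)]
            exact commutator_mono (ih (k + 1)) le_rfl
        _ ≤ upperCentralSeries H k := commutator_upperCentralSeries_top_le H k

theorem commutator_sup_eq_of_commutator_eq_bot {A B C : Subgroup H} [B.Normal]
    (h : ⁅A, B⁆ = ⊥) : ⁅A, C ⊔ B⁆ = ⁅A, C⁆ := by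
  refine le_antisymm ?_ (commutator_mono le_rfl le_sup_left)
  rw [commutator_le]
  rintro a ha _ hcb
  obtain ⟨c, hc, b, hb, rfl⟩ : _ ∈ (C : Set H) * (B : Set H) := by rwa [← mul_normal]
  have hab : ⁅a, b⁆ = 1 := by
    simpa [h] using commutator_mem_commutator ha hb
  have hexpand : ⁅a, c * b⁆ = ⁅a, c⁆ * (c * ⁅a, b⁆ * c⁻¹) := by
    simp only [commutatorElement_def]; group
  simpa [hexpand, hab] using commutator_mem_commutator ha hc

theorem lowerCentralSeries_le_of_sup_upperCentralSeries_eq_top {M : Subgroup H} [M.Normal]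
    {n : ℕ} (h : M ⊔ upperCentralSeries H n = ⊤) : (⊤ : Subgroup H).lowerCentralSeries n ≤ M := by
  have hπ := QuotientGroup.mk'_surjective M
  have htop : upperCentralSeries (H ⧸ M) n = ⊤ := by
    rw [eq_top_iff, ← map_top_of_surjective _ hπ, ← h, map_sup, QuotientGroup.map_mk'_self,
      bot_sup_eq]
    exact upperCentralSeries.map hπ n
  rwa [← lowerCentralSeries_eq_bot_iff_upperCentralSeries_eq_top, ← map_top_of_surjective _ hπ,
    ← map_lowerCentralSeries, map_eq_bot_iff, QuotientGroup.ker_mk'] at htop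

theorem lowerCentralSeries_sup_ker_eq_top {G : Type*} [Group G] [Group.IsPerfect G]
    {p : H →* G} (hp : Function.Surjective p) (k : ℕ) :
    (⊤ : Subgroup H).lowerCentralSeries k ⊔ p.ker = ⊤ := by
  rw [← comap_map_eq, map_lowerCentralSeries, map_top_of_surjective p hp,
    Group.IsPerfect.lowerCentralSeries_eq_top, comap_top]

end Subgroup

theorem perfect_lowerCentralSeries_of_ker_le_upperCentralSeries_general
    {H G : Type*} [Group H] [Group G] (p : H →* G) (hp : Function.Surjective p)
    (n : ℕ) (hker : p.ker ≤ Subgroup.upperCentralSeries H n)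
    (hG : commutator G = ⊤) :
    commutator ((⊤ : Subgroup H).lowerCentralSeries n) = ⊤ := by
  have : Group.IsPerfect G := ⟨hG⟩
  set L := (⊤ : Subgroup H).lowerCentralSeries n
  have hsup (k : ℕ) :
      (⊤ : Subgroup H).lowerCentralSeries k ⊔ Subgroup.upperCentralSeries H n = ⊤ :=
    top_unique <| (lowerCentralSeries_sup_ker_eq_top hp k).ge.trans (sup_le_sup_left hker _)
  have hcent : ⁅L, Subgroup.upperCentralSeries H n⁆ = ⊥ := by
    simpa using commutator_lowerCentralSeries_upperCentralSeries_le (H := H) n 0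
  have hLL : ⁅L, ⊤⁆ = ⁅L, L⁆ := by
    rw [← hsup n, commutator_sup_eq_of_commutator_eq_bot hcent]
  rw [← Group.isPerfect_def, isPerfect_iff]
  refine le_antisymm (commutator_le_left L L) ?_
  apply lowerCentralSeries_le_of_sup_upperCentralSeries_eq_top
  rw [← hLL]
  exact hsup (n + 1)

/-- If `p : H → G` is a surjective group homomorphism whose kernel is contained in the
`n`-th term of the upper central series of `H` (for a positive integer `n`), and `G` is
perfect, then `γ_{n+1}(H) = lowerCentralSeries H n` is a perfect group. -/
theorem perfect_lowerCentralSeries_of_ker_le_upperCentralSeries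
    {H G : Type*} [Group H] [Group G] (p : H →* G) (hp : Function.Surjective p)
    (n : ℕ) (hn : 0 < n) (hker : p.ker ≤ Subgroup.upperCentralSeries H n)
    (hG : commutator G = ⊤) :
    commutator ((⊤ : Subgroup H).lowerCentralSeries n) = ⊤ :=
  perfect_lowerCentralSeries_of_ker_le_upperCentralSeries_general p hp n hker hG
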